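/- arXiv:1810.09894 — 3 statements merged into one kernel-verified Lean document; each statement's English description precedes it below -/
import Mathlib

section
/- Let a < 0, c > 0, b ∈ ℝ, and f(m) = a·m² + b·m + c·log(m²) for m ≠ 0. If b > 0 then the global maximizer of f over ℝ \ {0} is m̲ = (-b - √(b² - 16ac))/(4a). -/
/-- If a < 0, c > 0 and b > 0, then m̲ = (-b - √(b² - 16ac))/(4a) is the (unique)
global maximizer of f(m) = a m² + b m + c log(m²) over ℝ \ {0}. -/
theorem stmt0 (a b c : ℝ) (ha : a < 0) (hc : 0 < c) (hb : 0 < b) :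
    let f : ℝ → ℝ := fun m => a * m ^ 2 + b * m + c * Real.log (m ^ 2)
    let m₀ : ℝ := (-b - Real.sqrt (b ^ 2 - 16 * a * c)) / (4 * a)
    m₀ ≠ 0 ∧ (∀ m : ℝ, m ≠ 0 → f m ≤ f m₀) ∧
      (∀ m : ℝ, m ≠ 0 → f m = f m₀ → m = m₀) := by
  intro f m₀
  have hD : (0:ℝ) < b ^ 2 - 16 * a * c := by nlinarith
  set s := Real.sqrt (b ^ 2 - 16 * a * c) with hs_def
  have hs2 : s ^ 2 = b ^ 2 - 16 * a * c := Real.sq_sqrt hD.le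
  have hs0 : 0 < s := Real.sqrt_pos.mpr hD
  have hm₀def : m₀ = (-b - s) / (4 * a) := rfl
  clear_value s m₀
  have ha4 : (4:ℝ) * a ≠ 0 := by nlinarith
  have hm₀pos : 0 < m₀ := by
    rw [hm₀def]
    apply div_pos_of_neg_of_neg <;> nlinarith
  have h4 : 4 * a * m₀ = -b - s := by
    rw [hm₀def]; field_simp [ha.ne]
  have hrel : 2 * a * m₀ ^ 2 + b * m₀ + 2 * c = 0 := by
    have h8 : (8:ℝ) * a ≠ 0 := by nlinarith
    have h' : 8 * a * (2 * a * m₀ ^ 2 + b * m₀ + 2 * c) = 0 := by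
      linear_combination (4 * a * m₀ + b - s) * h4 + hs2
    rcases mul_eq_zero.mp h' with h'' | h''
    · exact absurd h'' h8
    · exact h''
  have hc_eq : c = -(2 * a * m₀ ^ 2 + b * m₀) / 2 := by linarith
  have key : ∀ m : ℝ, m ≠ 0 → m ≠ m₀ → f m < f m₀ := by
    intro m hm hne
    have hm2 : (0:ℝ) < m ^ 2 := by positivity
    have hm₀2 : (0:ℝ) < m₀ ^ 2 := by positivity
    show a * m ^ 2 + b * m + c * Real.log (m ^ 2)
        < a * m₀ ^ 2 + b * m₀ + c * Real.log (m₀ ^ 2)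
    by_cases hcase : m = -m₀
    · subst hcase
      rw [neg_sq]
      nlinarith [mul_pos hb hm₀pos]
    · have hne2 : m ^ 2 / m₀ ^ 2 ≠ 1 := by
        intro h
        have hsq : m ^ 2 = m₀ ^ 2 := by
          field_simp at h; linarith
        have : (m - m₀) * (m + m₀) = 0 := by linear_combination hsq
        rcases mul_eq_zero.mp this with h' | h'
        · exact hne (by linarith)
        · exact hcase (by linarith)
      have hlt : Real.log (m ^ 2 / m₀ ^ 2) < m ^ 2 / m₀ ^ 2 - 1 :=
        Real.log_lt_sub_one_of_pos (by positivity) hne2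
      have hlog : Real.log (m ^ 2 / m₀ ^ 2)
          = Real.log (m ^ 2) - Real.log (m₀ ^ 2) :=
        Real.log_div hm2.ne' hm₀2.ne'
      have h1 : c * Real.log (m ^ 2) - c * Real.log (m₀ ^ 2)
          < c * (m ^ 2 / m₀ ^ 2 - 1) := by
        rw [← mul_sub, ← hlog]
        exact mul_lt_mul_of_pos_left hlt hc
      have h2 : a * m ^ 2 + b * m + c * (m ^ 2 / m₀ ^ 2 - 1)
          - (a * m₀ ^ 2 + b * m₀) = -(b * (m - m₀) ^ 2) / (2 * m₀) := by
        rw [hc_eq]; field_simp; ring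
      have h3 : -(b * (m - m₀) ^ 2) / (2 * m₀) ≤ 0 := by
        apply div_nonpos_of_nonpos_of_nonneg
        · nlinarith [sq_nonneg (m - m₀)]
        · linarith
      linarith
  refine ⟨hm₀pos.ne', fun m hm => ?_, fun m hm hfeq => ?_⟩
  · by_cases h : m = m₀
    · rw [h]
    · exact (key m hm h).le
  · by_contra h
    exact absurd hfeq (key m hm h).ne
end

section
/- Let a < 0, c > 0, b ∈ ℝ, and f(m) = a·m² + b·m + c·log(m²) for m ≠ 0. If b < 0 then the global maximizer of f over ℝ \ {0} is m̄ = (-b + √(b² - 16ac))/(4a). -/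
/-!
The tangent-line bound `log t < t - 1` (for `t ≠ 1`), applied with `t = x / m̄`, gives for
`x < 0`, `x ≠ m̄` the estimate `f x < f m̄ + a (x - m̄)²`, because `m̄` is the negative root of
`2a m² + b m + 2c`, i.e. a critical point of `f`. Positive arguments do worse than their
negatives, since `f m = f (-m) + 2bm` and `b < 0`.
-/

theorem Real.log_sub_log_lt_div_sub_one {x y : ℝ} (hxy : 0 < x / y) (hne : x ≠ y) :
    Real.log x - Real.log y < x / y - 1 := by
  have hy : y ≠ 0 := by rintro rfl; simp at hxy
  have hx : x ≠ 0 := by rintro rfl; simp at hxy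
  rw [← Real.log_div hx hy]
  exact Real.log_lt_sub_one_of_pos hxy (by rwa [Ne, div_eq_one_iff_eq hy])

noncomputable def logQuad (a b c m : ℝ) : ℝ := a * m ^ 2 + b * m + c * Real.log (m ^ 2)

theorem logQuad_neg (a b c m : ℝ) : logQuad a b c (-m) = logQuad a b c m - 2 * b * m := by
  simp only [logQuad, neg_sq]
  ring

theorem logQuad_lt_of_neg {a b c m₁ x : ℝ} (ha : a ≤ 0) (hc : 0 < c) (hm₁ : m₁ < 0)
    (hcrit : 2 * a * m₁ ^ 2 + b * m₁ + 2 * c = 0) (hx : x < 0) (hne : x ≠ m₁) :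
    logQuad a b c x < logQuad a b c m₁ := by
  have hlog : Real.log x - Real.log m₁ < x / m₁ - 1 :=
    Real.log_sub_log_lt_div_sub_one (div_pos_of_neg_of_neg hx hm₁) hne
  have htangent : 2 * c * (x / m₁ - 1) = -(2 * a * m₁ + b) * (x - m₁) := by
    rw [show 2 * c = -(2 * a * m₁ + b) * m₁ by linear_combination hcrit]
    field_simp [hm₁.ne]
  calc logQuad a b c x
      = logQuad a b c m₁ + a * (x ^ 2 - m₁ ^ 2) + b * (x - m₁)
          + 2 * c * (Real.log x - Real.log m₁) := by
        simp only [logQuad, Real.log_pow, Nat.cast_ofNat]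
        ring
    _ < logQuad a b c m₁ + a * (x ^ 2 - m₁ ^ 2) + b * (x - m₁) + 2 * c * (x / m₁ - 1) := by
        gcongr
    _ = logQuad a b c m₁ + a * (x - m₁) ^ 2 := by
        rw [htangent]
        ring
    _ ≤ logQuad a b c m₁ :=
        add_le_of_nonpos_right (mul_nonpos_of_nonpos_of_nonneg ha (sq_nonneg _))

theorem logQuad_lt_of_ne {a b c m₁ m : ℝ} (ha : a ≤ 0) (hb : b < 0) (hc : 0 < c) (hm₁ : m₁ < 0)
    (hcrit : 2 * a * m₁ ^ 2 + b * m₁ + 2 * c = 0) (hm : m ≠ 0) (hne : m ≠ m₁) :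
    logQuad a b c m < logQuad a b c m₁ := by
  rcases hm.lt_or_gt with hneg | hpos
  · exact logQuad_lt_of_neg ha hc hm₁ hcrit hneg hne
  · have hreflect : logQuad a b c m < logQuad a b c (-m) := by
      rw [logQuad_neg]
      nlinarith
    have hmirror : logQuad a b c (-m) ≤ logQuad a b c m₁ := by
      rcases eq_or_ne (-m) m₁ with h | h
      · rw [h]
      · exact (logQuad_lt_of_neg ha hc hm₁ hcrit (by linarith) h).le
    exact hreflect.trans_le hmirror

noncomputable def logQuadCrit (a b c : ℝ) : ℝ := (-b + √(b ^ 2 - 16 * a * c)) / (4 * a)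

theorem logQuadCrit_isRoot {a b c : ℝ} (ha : a < 0) (hc : 0 < c) :
    2 * a * logQuadCrit a b c ^ 2 + b * logQuadCrit a b c + 2 * c = 0 := by
  have hdisc : discrim (2 * a) b (2 * c) = √(b ^ 2 - 16 * a * c) * √(b ^ 2 - 16 * a * c) := by
    rw [Real.mul_self_sqrt (by nlinarith), discrim]
    ring
  have hroot := (quadratic_eq_zero_iff (by linarith) hdisc (logQuadCrit a b c)).2
    (.inl (by rw [logQuadCrit]; ring_nf))
  linear_combination hroot

theorem logQuadCrit_neg {a b c : ℝ} (ha : a < 0) (hc : 0 < c) : logQuadCrit a b c < 0 := by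
  have hsqrt : |b| < √(b ^ 2 - 16 * a * c) := by
    rw [← Real.sqrt_sq_eq_abs]
    exact Real.sqrt_lt_sqrt (sq_nonneg b) (by nlinarith)
  have hpos : 0 < -b + √(b ^ 2 - 16 * a * c) := by linarith [le_abs_self b]
  exact div_neg_of_pos_of_neg hpos (by linarith)

/-- If a < 0, c > 0 and b < 0, then m̄ = (-b + √(b² - 16ac))/(4a) is the (unique)
global maximizer of f(m) = a m² + b m + c log(m²) over ℝ \ {0}. -/
theorem stmt1 (a b c : ℝ) (ha : a < 0) (hc : 0 < c) (hb : b < 0) :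
    let f : ℝ → ℝ := fun m => a * m ^ 2 + b * m + c * Real.log (m ^ 2)
    let m₁ : ℝ := (-b + Real.sqrt (b ^ 2 - 16 * a * c)) / (4 * a)
    m₁ ≠ 0 ∧ (∀ m : ℝ, m ≠ 0 → f m ≤ f m₁) ∧
      (∀ m : ℝ, m ≠ 0 → f m = f m₁ → m = m₁) := by
  intro f m₁
  have hneg : m₁ < 0 := logQuadCrit_neg ha hc
  have hlt : ∀ m, m ≠ 0 → m ≠ m₁ → f m < f m₁ := fun m hm hne =>
    logQuad_lt_of_ne ha.le hb hc hneg (logQuadCrit_isRoot ha hc) hm hne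
  refine ⟨hneg.ne, fun m hm => ?_, fun m hm heq => ?_⟩
  · rcases eq_or_ne m m₁ with h | h
    · rw [h]
    · exact (hlt m hm h).le
  · by_contra h
    exact (hlt m hm h).ne heq
end

section
/- Let a < 0, c < 0, d > 0, and f(m) = a·m² + b·m + c·|m| + d·log(m²) for m ≠ 0. If b = 0 then f is even and m⁺ = (-c - √(c² - 16ad))/(4a) and -m⁺ are both global maximizers of f over ℝ \ {0}. -/
/-!
For `m > 0` the function `a m² + c m + d log (m²)` is concave when `a < 0 < d`, so its positive
critical point, the positive root `m⁺` of `2 a m² + c m + 2 d = 0`, maximizes it on `(0, ∞)`.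
Since `f` depends on `m` only through `|m|` when `b = 0`, `±m⁺` maximize it on `ℝ \ {0}`.
-/

open Real

lemma mul_log_sq_sub_log_sq_le {m p : ℝ} (hm : 0 < m) (hp : 0 < p) :
    p * (log (m ^ 2) - log (p ^ 2)) ≤ 2 * (m - p) := by
  have hlog : log m - log p ≤ m / p - 1 := by
    rw [← log_div hm.ne' hp.ne']
    exact log_le_sub_one_of_pos (div_pos hm hp)
  calc p * (log (m ^ 2) - log (p ^ 2)) = 2 * (p * (log m - log p)) := by
        simp only [log_pow]; push_cast; ring
    _ ≤ 2 * (p * (m / p - 1)) := by gcongr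
    _ = 2 * (m - p) := by field_simp

lemma quadratic_add_log_sq_le_of_critical {a c d m p : ℝ} (ha : a ≤ 0) (hd : 0 ≤ d)
    (hp : 0 < p) (hcrit : 2 * a * p ^ 2 + c * p + 2 * d = 0) (hm : 0 < m) :
    a * m ^ 2 + c * m + d * log (m ^ 2) ≤ a * p ^ 2 + c * p + d * log (p ^ 2) := by
  have hlog := mul_le_mul_of_nonneg_left (mul_log_sq_sub_log_sq_le hm hp) hd
  -- multiplied by `p`, the difference of the two sides is at most `a p (m - p)² ≤ 0`
  have hquad : a * p * (m - p) ^ 2 ≤ 0 :=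
    mul_nonpos_of_nonpos_of_nonneg (mul_nonpos_of_nonpos_of_nonneg ha hp.le) (sq_nonneg _)
  refine le_of_mul_le_mul_left ?_ hp
  nlinarith

lemma quadratic_abs_add_log_sq_le_of_critical {a c d m p : ℝ} (ha : a ≤ 0) (hd : 0 ≤ d)
    (hp : 0 < p) (hcrit : 2 * a * p ^ 2 + c * p + 2 * d = 0) (hm : m ≠ 0) :
    a * m ^ 2 + c * |m| + d * log (m ^ 2) ≤ a * p ^ 2 + c * p + d * log (p ^ 2) := by
  simpa only [sq_abs] using quadratic_add_log_sq_le_of_critical ha hd hp hcrit (abs_pos.mpr hm)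

lemma quadratic_pos_root_of_neg_of_pos {a c d : ℝ} (ha : a < 0) (hd : 0 < d) :
    let p := (-c - sqrt (c ^ 2 - 16 * a * d)) / (4 * a)
    0 < p ∧ 2 * a * p ^ 2 + c * p + 2 * d = 0 := by
  intro p
  have hdisc : 0 ≤ c ^ 2 - 16 * a * d := by nlinarith
  have hsqrt : -c < sqrt (c ^ 2 - 16 * a * d) :=
    calc -c ≤ |c| := neg_le_abs c
      _ = sqrt (c ^ 2) := (sqrt_sq_eq_abs c).symm
      _ < sqrt (c ^ 2 - 16 * a * d) := sqrt_lt_sqrt (sq_nonneg c) (by nlinarith)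
  have h4a : 4 * a * p = -c - sqrt (c ^ 2 - 16 * a * d) := mul_div_cancel₀ _ (by linarith)
  refine ⟨div_pos_of_neg_of_neg (by linarith) (by linarith), ?_⟩
  have hroot : 8 * a * (2 * a * p ^ 2 + c * p + 2 * d) = 0 := by
    linear_combination (c + 4 * a * p - sqrt (c ^ 2 - 16 * a * d)) * h4a + sq_sqrt hdisc
  exact (mul_eq_zero.mp hroot).resolve_left (by linarith)

theorem stmt8_general (a c d : ℝ) (ha : a < 0) (hd : 0 < d) :
    let b : ℝ := 0
    let f : ℝ → ℝ := fun m => a * m ^ 2 + b * m + c * |m| + d * Real.log (m ^ 2)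
    let mp : ℝ := (-c - Real.sqrt (c ^ 2 - 16 * a * d)) / (4 * a)
    (∀ m : ℝ, f (-m) = f m) ∧ mp ≠ 0 ∧
      (∀ m : ℝ, m ≠ 0 → f m ≤ f mp) ∧ (∀ m : ℝ, m ≠ 0 → f m ≤ f (-mp)) := by
  intro b f mp
  obtain ⟨hmp, hcrit⟩ : 0 < mp ∧ 2 * a * mp ^ 2 + c * mp + 2 * d = 0 :=
    quadratic_pos_root_of_neg_of_pos ha hd
  have heven : ∀ m, f (-m) = f m := fun m => by simp only [f, neg_sq, abs_neg, b]; ring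
  have hmax : ∀ m, m ≠ 0 → f m ≤ f mp := fun m hm => by
    simpa only [f, b, zero_mul, add_zero, abs_of_pos hmp] using
      quadratic_abs_add_log_sq_le_of_critical ha.le hd.le hmp hcrit hm
  exact ⟨heven, hmp.ne', hmax, fun m hm => heven mp ▸ hmax m hm⟩

/-- If a < 0, c < 0, d > 0 and b = 0, then f(m) = a m² + b m + c |m| + d log(m²)
is even, and m⁺ = (-c - √(c² - 16ad))/(4a) and -m⁺ are both global maximizers of f
over ℝ \ {0}. -/
theorem stmt8 (a c d : ℝ) (ha : a < 0) (hc : c < 0) (hd : 0 < d) :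
    let b : ℝ := 0
    let f : ℝ → ℝ := fun m => a * m ^ 2 + b * m + c * |m| + d * Real.log (m ^ 2)
    let mp : ℝ := (-c - Real.sqrt (c ^ 2 - 16 * a * d)) / (4 * a)
    (∀ m : ℝ, f (-m) = f m) ∧ mp ≠ 0 ∧
      (∀ m : ℝ, m ≠ 0 → f m ≤ f mp) ∧ (∀ m : ℝ, m ≠ 0 → f m ≤ f (-mp)) :=
  stmt8_general a c d ha hd
end
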